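/- arXiv:2307.16076 — 2 statements merged into one kernel-verified Lean document; each statement's English description precedes it below -/
import Mathlib

section
/- Let A be a small category, let φ : G ⟹ F and ψ : H ⟹ F be split opfibrations in the 2-category [A, Cat] over F, and let ξ : G ⟹ H be a natural transformation with ψ ∘ ξ = φ (a morphism in the slice over F). Then ξ is cleavage preserving as a morphism of split opfibrations in [A, Cat] if and only if for every object A of A the component ξ_A : G(A) ⥤ H(A) is a cleavage-preserving morphism over F(A) between the split opfibrations φ_A and ψ_A in Cat. -/
universe w' w v u
open CategoryTheory
namespace IG

structure SplitCleavage {E : Type*} [Category E] {C : Type*} [Category C] (p : E ⥤ C) where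
  pushObj : ∀ (e : E) {c : C}, (p.obj e ⟶ c) → E
  pushMap : ∀ (e : E) {c : C} (f : p.obj e ⟶ c), e ⟶ pushObj e f
  pushObj_eq : ∀ (e : E) {c : C} (f : p.obj e ⟶ c), p.obj (pushObj e f) = c
  pushMap_eq : ∀ (e : E) {c : C} (f : p.obj e ⟶ c),
    p.map (pushMap e f) = f ≫ eqToHom (pushObj_eq e f).symm
  cocartesian : ∀ (e : E) {c : C} (f : p.obj e ⟶ c) {e' : E} (m : e ⟶ e')
    (g : c ⟶ p.obj e'), p.map m = f ≫ g →
    ∃! v : pushObj e f ⟶ e', p.map v = eqToHom (pushObj_eq e f) ≫ g ∧ pushMap e f ≫ v = m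
  pushObj_id : ∀ e : E, pushObj e (𝟙 (p.obj e)) = e
  pushMap_id : ∀ e : E, pushMap e (𝟙 (p.obj e)) = eqToHom (pushObj_id e).symm
  pushObj_comp : ∀ (e : E) {c c' : C} (f : p.obj e ⟶ c) (g : c ⟶ c'),
    pushObj (pushObj e f) (eqToHom (pushObj_eq e f) ≫ g) = pushObj e (f ≫ g)
  pushMap_comp : ∀ (e : E) {c c' : C} (f : p.obj e ⟶ c) (g : c ⟶ c'),
    pushMap e f ≫ pushMap (pushObj e f) (eqToHom (pushObj_eq e f) ≫ g) =
      pushMap e (f ≫ g) ≫ eqToHom (pushObj_comp e f g).symm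

def PreservesCleavage {E : Type*} [Category E] {C : Type*} [Category C]
    {E' : Type*} [Category E'] {C' : Type*} [Category C']
    {p : E ⥤ C} {q : E' ⥤ C'} (cp : SplitCleavage p) (cq : SplitCleavage q)
    (H : E ⥤ E') (K : C ⥤ C') : Prop :=
  ∃ w : p ⋙ K = H ⋙ q,
    ∀ (e : E) {c : C} (f : p.obj e ⟶ c),
      ∃ hobj : cq.pushObj (H.obj e) (eqToHom (Functor.congr_obj w e).symm ≫ K.map f)
          = H.obj (cp.pushObj e f),
        H.map (cp.pushMap e f) =
          cq.pushMap (H.obj e) (eqToHom (Functor.congr_obj w e).symm ≫ K.map f) ≫ eqToHom hobj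

def DiscreteOpfibration {E : Type*} [Category E] {C : Type*} [Category C] (p : E ⥤ C) : Prop :=
  ∀ (e : E) {c : C} (f : p.obj e ⟶ c),
    ∃! q' : Σ e' : E, e ⟶ e', ∃ h : p.obj q'.1 = c, p.map q'.2 = f ≫ eqToHom h.symm

section
variable {C : Type u} [Category.{u} C]

structure SplitOpfib (C : Type u) [Category.{u} C] : Type (u + 1) where
  E : Type u
  str : Category.{u} E
  p : E ⥤ C
  cl : SplitCleavage p

attribute [instance] SplitOpfib.str

theorem PreservesCleavage.id_pc {E : Type*} [Category E] {p : E ⥤ C} (cp : SplitCleavage p) :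
    PreservesCleavage cp cp (𝟭 E) (𝟭 C) := by
  refine ⟨rfl, fun e c f => ?_⟩
  have : (eqToHom (Functor.congr_obj (rfl : p ⋙ 𝟭 C = 𝟭 E ⋙ p) e).symm ≫ (𝟭 C).map f) = f := by
    simp
  rw [this]
  exact ⟨rfl, by simp⟩

theorem PreservesCleavage.comp_pc {E : Type*} [Category E] {C : Type*} [Category C]
    {E' : Type*} [Category E'] {C' : Type*} [Category C']
    {E'' : Type*} [Category E''] {C'' : Type*} [Category C'']
    {p : E ⥤ C} {q : E' ⥤ C'} {r : E'' ⥤ C''}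
    {cp : SplitCleavage p} {cq : SplitCleavage q} {cr : SplitCleavage r}
    {H : E ⥤ E'} {K : C ⥤ C'} {H' : E' ⥤ E''} {K' : C' ⥤ C''}
    (h1 : PreservesCleavage cp cq H K) (h2 : PreservesCleavage cq cr H' K') :
    PreservesCleavage cp cr (H ⋙ H') (K ⋙ K') := by
  obtain ⟨w1, hw1⟩ := h1
  obtain ⟨w2, hw2⟩ := h2
  have w : p ⋙ (K ⋙ K') = (H ⋙ H') ⋙ r := by
    rw [← Functor.assoc, w1, Functor.assoc, w2, Functor.assoc]
  refine ⟨w, fun e c f => ?_⟩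
  obtain ⟨o1, m1⟩ := hw1 e f
  obtain ⟨o2, m2⟩ := hw2 (H.obj e) (eqToHom (Functor.congr_obj w1 e).symm ≫ K.map f)
  have harg : (eqToHom (Functor.congr_obj w e).symm ≫ (K ⋙ K').map f) =
      eqToHom (Functor.congr_obj w2 (H.obj e)).symm ≫
        K'.map (eqToHom (Functor.congr_obj w1 e).symm ≫ K.map f) := by
    simp [eqToHom_map]
  rw [harg]
  refine ⟨o2.trans (congrArg H'.obj o1), ?_⟩
  show H'.map (H.map (cp.pushMap e f)) = _
  rw [m1, Functor.map_comp, m2, eqToHom_map]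
  simp

/-- the category of split opfibrations over `C`, with cleavage-preserving
functors over `C` as morphisms. -/
instance : Category.{u} (SplitOpfib C) where
  Hom P Q := {H : P.E ⥤ Q.E // PreservesCleavage P.cl Q.cl H (𝟭 C)}
  id P := ⟨𝟭 P.E, PreservesCleavage.id_pc P.cl⟩
  comp f g := ⟨f.1 ⋙ g.1, PreservesCleavage.comp_pc f.2 g.2⟩
  id_comp f := rfl
  comp_id f := rfl
  assoc f g h := rfl

/-- the fibre of `p : E ⥤ C` over `c : C`. -/
def Fiber {E : Type w} [Category.{w'} E] (p : E ⥤ C) (c : C) : Type w :=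
  {e : E // p.obj e = c}

instance {E : Type w} [Category.{w'} E] (p : E ⥤ C) (c : C) : Category (Fiber p c) where
  Hom a b := {m : a.1 ⟶ b.1 // p.map m = eqToHom (a.2.trans b.2.symm)}
  id a := ⟨𝟙 _, by simp⟩
  comp f g := ⟨f.1 ≫ g.1, by rw [Functor.map_comp, f.2, g.2, eqToHom_trans]⟩
  id_comp f := Subtype.ext (Category.id_comp f.1)
  comp_id f := Subtype.ext (Category.comp_id f.1)
  assoc f g h := Subtype.ext (Category.assoc f.1 g.1 h.1)

/-- a discrete opfibration over `C`. -/
structure DOpfib (C : Type u) [Category.{u} C] : Type (u + 1) where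
  E : Type u
  str : Category.{u} E
  p : E ⥤ C
  disc : DiscreteOpfibration p

attribute [instance] DOpfib.str

/-- the category of discrete opfibrations over `C`, with functors commuting with
the projections as morphisms. -/
instance : Category.{u} (DOpfib C) where
  Hom P Q := {H : P.E ⥤ Q.E // H ⋙ Q.p = P.p}
  id P := ⟨𝟭 P.E, rfl⟩
  comp f g := ⟨f.1 ⋙ g.1, by rw [Functor.assoc, g.2, f.2]⟩
  id_comp f := Subtype.ext rfl
  comp_id f := Subtype.ext rfl
  assoc f g h := Subtype.ext rfl

end

/-- the canonical split cleavage on the Grothendieck construction projection is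
given by the morphisms `(f, 𝟙)`. -/
def IsGrothCleavage {C : Type u} [Category.{u} C] (F : C ⥤ Cat.{u, u})
    (cl : SplitCleavage (Grothendieck.forget F)) : Prop :=
  ∀ (X : Grothendieck F) {c : C} (f : X.base ⟶ c),
    ∃ h : cl.pushObj X f = ({ base := c, fiber := (F.map f).toFunctor.obj X.fiber } : Grothendieck F),
      cl.pushMap X f =
        ({ base := f, fiber := 𝟙 _ } :
            X ⟶ ({ base := c, fiber := (F.map f).toFunctor.obj X.fiber } : Grothendieck F)) ≫
          eqToHom h.symm

section NatCatSection

variable {A : Type u} [Category.{u} A]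

theorem natEq {X G : A ⥤ Cat.{u, u}} (α : X ⟶ G) {a b : A} (h : a ⟶ b) :
    ((X.map h).toFunctor : (X.obj a : Type u) ⥤ (X.obj b : Type u)) ⋙
        ((α.app b).toFunctor : (X.obj b : Type u) ⥤ (G.obj b : Type u)) =
      ((α.app a).toFunctor : (X.obj a : Type u) ⥤ (G.obj a : Type u)) ⋙
        ((G.map h).toFunctor : (G.obj a : Type u) ⥤ (G.obj b : Type u)) :=
  congrArg Cat.Hom.toFunctor (α.naturality h)

theorem app_eq_of_obj_eq {C : Type*} [Category C] {D : Type*} [Category D]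
    {P Q : C ⥤ D} (t : P ⟶ Q) {o1 o2 : C} (ho : o1 = o2) :
    t.app o1 = eqToHom (by rw [ho]) ≫ t.app o2 ≫ eqToHom (by rw [ho]) := by
  cases ho; simp

/-- A modification between natural transformations `α β : X ⟶ G` of functors
`A ⥤ Cat`, i.e. a 2-cell of the 2-category `[A, Cat]`. -/
@[ext]
structure Modif {X G : A ⥤ Cat.{u, u}} (α β : X ⟶ G) where
  app : ∀ a : A, ((α.app a).toFunctor : (X.obj a : Type u) ⥤ (G.obj a : Type u)) ⟶
    ((β.app a).toFunctor : (X.obj a : Type u) ⥤ (G.obj a : Type u))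
  naturality : ∀ {a b : A} (h : a ⟶ b),
    Functor.whiskerLeft ((X.map h).toFunctor : (X.obj a : Type u) ⥤ (X.obj b : Type u)) (app b) ≫
        eqToHom (natEq β h) =
      eqToHom (natEq α h) ≫ Functor.whiskerRight (app a) (G.map h).toFunctor

/-- The hom-category `[A, Cat](X, G)`: objects are natural transformations
`X ⟶ G`, morphisms are modifications. -/
def NatCat (X G : A ⥤ Cat.{u, u}) : Type u := X ⟶ G

instance (X G : A ⥤ Cat.{u, u}) : Category.{u} (NatCat X G) where
  Hom α β := Modif α β
  id α :=
    { app := fun a => 𝟙 _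
      naturality := by
        intro a b h
        rw [Functor.whiskerLeft_id', Functor.whiskerRight_id', Category.id_comp, Category.comp_id] }
  comp m n :=
    { app := fun a => m.app a ≫ n.app a
      naturality := by
        intro a b h
        rw [Functor.whiskerLeft_comp, Functor.whiskerRight_comp, Category.assoc, n.naturality h,
          ← Category.assoc, ← Category.assoc, m.naturality h, Category.assoc] }
  id_comp m := by apply Modif.ext; funext a; simp
  comp_id m := by apply Modif.ext; funext a; simp
  assoc m n o := by apply Modif.ext; funext a; simp

/-- Postcomposition `φ ∘ −` with `φ : G ⟶ F`, as a functor between hom-categories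
of the 2-category `[A, Cat]`. -/
def postcompNat {G F : A ⥤ Cat.{u, u}} (φ : G ⟶ F) (X : A ⥤ Cat.{u, u}) :
    NatCat X G ⥤ NatCat X F where
  obj α := α ≫ φ
  map {α β} m :=
    { app := fun a => Functor.whiskerRight (m.app a) ((φ.app a).toFunctor : (G.obj a : Type u) ⥤ (F.obj a : Type u))
      naturality := by
        intro a b h
        ext x
        have hm := NatTrans.congr_app (m.naturality h) x
        simp only [NatTrans.comp_app, Functor.whiskerLeft_app, Functor.whiskerRight_app, eqToHom_app] at hm
        dsimp only [NatTrans.comp_app]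
        repeat erw [eqToHom_app]
        repeat erw [Functor.whiskerLeft_app]
        repeat erw [Functor.whiskerRight_app]
        have hφ := Functor.congr_hom (natEq φ h) ((m.app a).app x)
        simp only [Functor.comp_map] at hφ
        rw [comp_eqToHom_iff] at hm
        rw [hm]
        simp only [Functor.map_comp, eqToHom_map, hφ]
        have key : ∀ {C : Type u} [Category.{u} C] {a0 a1 a2 a3 a4 a5 : C} (M : a2 ⟶ a3) (h1 : a0 = a1)
            (h2 : a1 = a2) (h3 : a3 = a4) (h4 : a4 = a5) (h5 : a5 = a3) (h6 : a0 = a2),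
            ((eqToHom h1 ≫ eqToHom h2 ≫ M ≫ eqToHom h3) ≫ eqToHom h4) ≫ eqToHom h5 = eqToHom h6 ≫ M := by
          intros; subst_vars; simp
        apply key }
  map_id α := by
    apply Modif.ext; funext a
    show Functor.whiskerRight (𝟙 (α.app a).toFunctor) ((φ.app a).toFunctor : (G.obj a : Type u) ⥤ (F.obj a : Type u)) = 𝟙 _
    rw [Functor.whiskerRight_id']
  map_comp m n := by
    apply Modif.ext; funext a
    show Functor.whiskerRight (_ ≫ _) _ = Functor.whiskerRight _ _ ≫ Functor.whiskerRight _ _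
    rw [Functor.whiskerRight_comp]

/-- Precomposition `− ∘ λ` with `lam : K ⟶ X`, as a functor between hom-categories
of the 2-category `[A, Cat]`. -/
def precompNat {K X : A ⥤ Cat.{u, u}} (lam : K ⟶ X) (G : A ⥤ Cat.{u, u}) :
    NatCat X G ⥤ NatCat K G where
  obj α := lam ≫ α
  map {α β} m :=
    { app := fun a => Functor.whiskerLeft ((lam.app a).toFunctor : (K.obj a : Type u) ⥤ (X.obj a : Type u)) (m.app a)
      naturality := by
        intro a b h
        ext x
        have hO := Functor.congr_obj (natEq lam h) x
        simp only [Functor.comp_obj] at hO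
        have hm := NatTrans.congr_app (m.naturality h) ((lam.app a).toFunctor.obj x)
        simp only [NatTrans.comp_app, Functor.whiskerLeft_app, Functor.whiskerRight_app, eqToHom_app] at hm
        dsimp only [NatTrans.comp_app]
        erw [eqToHom_app, eqToHom_app, Functor.whiskerLeft_app, Functor.whiskerLeft_app, Functor.whiskerRight_app, Functor.whiskerLeft_app]
        rw [comp_eqToHom_iff] at hm
        rw [app_eq_of_obj_eq (m.app b) hO, hm]
        have key : ∀ {C : Type u} [Category.{u} C] {a0 a1 a2 a3 a4 a5 : C} (M : a2 ⟶ a3) (h1 : a0 = a1)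
            (h2 : a1 = a2) (h3 : a3 = a4) (h4 : a4 = a5) (h5 : a5 = a3) (h6 : a0 = a2),
            (eqToHom h1 ≫ ((eqToHom h2 ≫ M) ≫ eqToHom h3) ≫ eqToHom h4) ≫ eqToHom h5 = eqToHom h6 ≫ M := by
          intros; subst_vars; simp
        apply key }
  map_id α := by
    apply Modif.ext; funext a
    show Functor.whiskerLeft ((lam.app a).toFunctor : (K.obj a : Type u) ⥤ (X.obj a : Type u)) (𝟙 (α.app a).toFunctor) = 𝟙 _
    rw [Functor.whiskerLeft_id']
  map_comp m n := by
    apply Modif.ext; funext a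
    show Functor.whiskerLeft _ (_ ≫ _) = Functor.whiskerLeft _ _ ≫ Functor.whiskerLeft _ _
    rw [Functor.whiskerLeft_comp]

/-- A split opfibration in the 2-category `[A, Cat]` (representable definition):
every postcomposition functor `φ ∘ − : [A,Cat](X, G) ⥤ [A,Cat](X, F)` carries a
split cleavage, compatibly with all precompositions. -/
structure SplitOpfibInFunctorCat {G F : A ⥤ Cat.{u, u}} (φ : G ⟶ F) where
  cleav : ∀ X : A ⥤ Cat.{u, u}, SplitCleavage (postcompNat φ X)
  compat : ∀ {K X : A ⥤ Cat.{u, u}} (lam : K ⟶ X),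
    PreservesCleavage (cleav X) (cleav K) (precompNat lam G) (precompNat lam F)

end NatCatSection

section Statement7

variable {A : Type u} [Category.{u} A]

/-- The 2-categorical cleavage data `S` on `φ` corresponds to the componentwise
cleavages `cl`: the chosen lifts along `φ ∘ −` are computed componentwise by the
chosen lifts of the components of `φ`. -/
def ComponentwiseCleavage {G F : A ⥤ Cat.{u, u}} {φ : G ⟶ F}
    (S : SplitOpfibInFunctorCat φ)
    (cl : ∀ a : A, SplitCleavage ((φ.app a).toFunctor : (G.obj a : Type u) ⥤ (F.obj a : Type u))) : Prop :=
  ∀ (X : A ⥤ Cat.{u, u}) (α : NatCat X G) {β : NatCat X F}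
    (θ : (postcompNat φ X).obj α ⟶ β) (a : A) (x : (X.obj a : Type u)),
    ∃ hobj : (cl a).pushObj (((α.app a).toFunctor : (X.obj a : Type u) ⥤ (G.obj a : Type u)).obj x)
          ((θ.app a).app x) =
        ((((S.cleav X).pushObj α θ).app a).toFunctor : (X.obj a : Type u) ⥤ (G.obj a : Type u)).obj x,
      (((S.cleav X).pushMap α θ).app a).app x =
        (cl a).pushMap (((α.app a).toFunctor : (X.obj a : Type u) ⥤ (G.obj a : Type u)).obj x)
            ((θ.app a).app x) ≫ eqToHom hobj


section MyHelpers

theorem modif_hom_ext {X G : A ⥤ Cat.{u, u}} {α β : NatCat X G} {m n : α ⟶ β}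
    (h : ∀ (a : A) (x : (X.obj a : Type u)), (m.app a).app x = (n.app a).app x) : m = n :=
  Modif.ext (funext fun a => NatTrans.ext (funext (h a)))

theorem modif_eqToHom_app {X G : A ⥤ Cat.{u, u}} {α β : NatCat X G} (h : α = β) (a : A)
    (x : (X.obj a : Type u)) :
    ((eqToHom h).app a).app x =
      eqToHom (by rw [h]) := by
  cases h; rfl

theorem modif_comp_app {X G : A ⥤ Cat.{u, u}} {α β γ : NatCat X G} (m : α ⟶ β) (n : β ⟶ γ)
    (a : A) (x : (X.obj a : Type u)) :
    ((m ≫ n).app a).app x = (m.app a).app x ≫ (n.app a).app x := rfl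

theorem SplitCleavage.push_congr {E : Type*} [Category E] {C : Type*} [Category C]
    {p : E ⥤ C} (cl : SplitCleavage p) {e e' : E} (he : e = e') {c c' : C} (hc : c = c')
    (f : p.obj e ⟶ c) (f' : p.obj e' ⟶ c')
    (hf : f = eqToHom (by rw [he]) ≫ f' ≫ eqToHom hc.symm) :
    ∃ h : cl.pushObj e f = cl.pushObj e' f',
      cl.pushMap e f = eqToHom he ≫ cl.pushMap e' f' ≫ eqToHom h.symm := by
  subst he; subst hc
  simp only [eqToHom_refl, Category.id_comp, Category.comp_id] at hf
  subst hf
  exact ⟨rfl, by simp⟩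

theorem SplitCleavage.cocart_ext {E : Type*} [Category E] {C : Type*} [Category C]
    {p : E ⥤ C} (cl : SplitCleavage p) (e : E) {c : C} (f : p.obj e ⟶ c) {e' : E}
    (v₁ v₂ : cl.pushObj e f ⟶ e') (hp : p.map v₁ = p.map v₂)
    (hm : cl.pushMap e f ≫ v₁ = cl.pushMap e f ≫ v₂) : v₁ = v₂ := by
  have hg : p.map (cl.pushMap e f ≫ v₁) =
      f ≫ (eqToHom (cl.pushObj_eq e f).symm ≫ p.map v₁) := by
    rw [Functor.map_comp, cl.pushMap_eq]; simp
  obtain ⟨v, hv, hu⟩ := cl.cocartesian e f (cl.pushMap e f ≫ v₁) _ hg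
  have h1 : v₁ = v := hu v₁ ⟨by simp, rfl⟩
  have h2 : v₂ = v := hu v₂ ⟨by simp [← hp], hm.symm⟩
  rw [h1, h2]

theorem discrete_functor_ext {J : Type u} {D : Type*} [Category D] {F1 F2 : Discrete J ⥤ D}
    (h : ∀ j : J, F1.obj ⟨j⟩ = F2.obj ⟨j⟩) : F1 = F2 := by
  refine CategoryTheory.Functor.ext (fun x => h x.as) ?_
  rintro ⟨x⟩ ⟨y⟩ ⟨⟨f⟩⟩
  cases f
  change F1.map (𝟙 _) = _
  change _ = _ ≫ F2.map (𝟙 _) ≫ _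
  simp

theorem eqToHom_shuffle {C : Type*} [Category C] {a0 a1 a2 a3 a4 : C} (M : a2 ⟶ a3)
    (h1 : a0 = a1) (h2 : a1 = a2) (h3 : a3 = a4) (h4 : a0 = a2) (h5 : a3 = a4) :
    eqToHom h1 ≫ eqToHom h2 ≫ M ≫ eqToHom h3 = eqToHom h4 ≫ M ≫ eqToHom h5 := by
  subst_vars; simp

theorem eqToHom_shuffle3 {C : Type*} [Category C] {a0 a1 a2 a3 a4 a5 : C} (M : a3 ⟶ a4)
    (h1 : a0 = a1) (h2 : a1 = a2) (h3 : a2 = a3) (h4 : a4 = a5) (h5 : a0 = a3) (h6 : a4 = a5) :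
    eqToHom h1 ≫ eqToHom h2 ≫ eqToHom h3 ≫ M ≫ eqToHom h4 = eqToHom h5 ≫ M ≫ eqToHom h6 := by
  subst_vars; simp

theorem eqToHom_shuffle_map {C : Type*} [Category C] {D : Type*} [Category D] (K : C ⥤ D)
    {x0 x1 y0 : C} (M : x1 ⟶ y0) {d0 d1 d2 : D} (h1 : d0 = d1) (h2 : d1 = K.obj x1)
    (h3 : K.obj y0 = d2) (h4 : d2 = K.obj y0) (h5 : d0 = K.obj x0) (h6 : x0 = x1) :
    (eqToHom h1 ≫ (eqToHom h2 ≫ (K.map M ≫ eqToHom h3))) ≫ eqToHom h4 =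
      eqToHom h5 ≫ K.map (eqToHom h6 ≫ M) := by
  subst_vars; simp

/-- The "Yoneda" functor `A(a, −)`, valued in discrete categories. -/
def yon (a : A) : A ⥤ Cat.{u, u} where
  obj b := Cat.of (Discrete (a ⟶ b))
  map h := (Discrete.functor fun g => Discrete.mk (g ≫ h)).toCatHom
  map_id b := Cat.ext (discrete_functor_ext fun g => by simp; rfl)
  map_comp h k := Cat.ext (discrete_functor_ext fun g => by
    simp; exact congrArg Discrete.mk (Category.assoc g h k).symm)

/-- Natural transformation `yon a ⟶ P` associated to an object `e` of `P(a)`. -/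
def yonTrans (a : A) (P : A ⥤ Cat.{u, u}) (e : (P.obj a : Type u)) : yon a ⟶ P where
  app b := (Discrete.functor fun g => (P.map g).toFunctor.obj e).toCatHom
  naturality b b' h := Cat.ext (discrete_functor_ext fun g =>
    Functor.congr_obj (congrArg Cat.Hom.toFunctor (P.map_comp g h)) e)

/-- The modification `yonTrans a G e ≫ φ ⟶ yonTrans a F c` associated to a
morphism `f : φ_a(e) ⟶ c`. -/
def yonModif {G F : A ⥤ Cat.{u, u}} (φ : G ⟶ F) {a : A} (e : (G.obj a : Type u))
    {c : (F.obj a : Type u)} (f : (φ.app a).toFunctor.obj e ⟶ c) :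
    Modif (X := yon a) (yonTrans a G e ≫ φ) (yonTrans a F c) where
  app b := Discrete.natTrans fun g =>
    eqToHom (Functor.congr_obj (natEq φ g.as) e) ≫ (F.map g.as).toFunctor.map f
  naturality {b b'} h := by
    apply NatTrans.ext
    funext g
    simp only [NatTrans.comp_app]
    erw [eqToHom_app, eqToHom_app]
    change Discrete (a ⟶ b) at g
    obtain ⟨g⟩ := g
    have hF := Functor.congr_hom (congrArg Cat.Hom.toFunctor (F.map_comp g h)) f
    simp only [Cat.Hom.comp_toFunctor, Functor.comp_map] at hF
    show (eqToHom _ ≫ (F.map (g ≫ h)).toFunctor.map f) ≫ eqToHom _ =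
      eqToHom _ ≫ (F.map h).toFunctor.map (eqToHom _ ≫ (F.map g).toFunctor.map f)
    rw [hF]
    apply eqToHom_shuffle_map (F.map h).toFunctor

end MyHelpers

/-- **Statement 7.** Given split opfibrations `φ : G ⟶ F` and `ψ : H ⟶ F` in the
2-category `[A, Cat]` (with 2-categorical cleavages corresponding to componentwise
cleavages) and a morphism `ξ` over `F`, `ξ` is cleavage preserving (in the
representable, 2-categorical sense) if and only if each component `ξ_a` is a
cleavage-preserving morphism of split opfibrations over `F(a)` in `Cat`. -/
theorem cleavage_preserving_iff_componentwise {G H F : A ⥤ Cat.{u, u}}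
    {φ : G ⟶ F} {ψ : H ⟶ F} (ξ : G ⟶ H) (hξ : ξ ≫ ψ = φ)
    (Sφ : SplitOpfibInFunctorCat φ) (Sψ : SplitOpfibInFunctorCat ψ)
    (clφ : ∀ a : A, SplitCleavage ((φ.app a).toFunctor : (G.obj a : Type u) ⥤ (F.obj a : Type u)))
    (clψ : ∀ a : A, SplitCleavage ((ψ.app a).toFunctor : (H.obj a : Type u) ⥤ (F.obj a : Type u)))
    (hφc : ComponentwiseCleavage Sφ clφ) (hψc : ComponentwiseCleavage Sψ clψ) :
    (∀ X : A ⥤ Cat.{u, u},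
        PreservesCleavage (Sφ.cleav X) (Sψ.cleav X) (postcompNat ξ X) (𝟭 (NatCat X F))) ↔
      (∀ a : A,
        PreservesCleavage (clφ a) (clψ a)
          ((ξ.app a).toFunctor : (G.obj a : Type u) ⥤ (H.obj a : Type u)) (𝟭 (F.obj a : Type u))) := by
  have hξa : ∀ a : A, ((ξ.app a).toFunctor : (G.obj a : Type u) ⥤ (H.obj a : Type u)) ⋙
      ((ψ.app a).toFunctor : (H.obj a : Type u) ⥤ (F.obj a : Type u)) =
      ((φ.app a).toFunctor : (G.obj a : Type u) ⥤ (F.obj a : Type u)) := by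
    intro a; rw [← hξ]; rfl
  constructor
  · intro hX a
    have wa : ((φ.app a).toFunctor : (G.obj a : Type u) ⥤ (F.obj a : Type u)) ⋙ 𝟭 (F.obj a : Type u) =
        ((ξ.app a).toFunctor : (G.obj a : Type u) ⥤ (H.obj a : Type u)) ⋙
        ((ψ.app a).toFunctor : (H.obj a : Type u) ⥤ (F.obj a : Type u)) := by
      rw [Functor.comp_id, ← hξa a]
    refine ⟨wa, fun e {c} f => ?_⟩
    obtain ⟨W, hW⟩ := hX (yon a)
    set α : NatCat (yon a) G := yonTrans a G e with hα
    set θ : (postcompNat φ (yon a)).obj α ⟶ yonTrans a F c := yonModif φ e f with hθ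
    obtain ⟨HO, HM⟩ := hW α θ
    set θW : (postcompNat ψ (yon a)).obj ((postcompNat ξ (yon a)).obj α) ⟶ yonTrans a F c :=
      eqToHom (Functor.congr_obj W α).symm ≫ (𝟭 (NatCat (yon a) F)).map θ with hθW
    set x : ((yon a).obj a : Type u) := Discrete.mk (𝟙 a) with hx
    obtain ⟨h1, h2⟩ := hφc (yon a) α θ a x
    obtain ⟨h3, h4⟩ := hψc (yon a) ((postcompNat ξ (yon a)).obj α) θW a x
    have HOc : ((((Sψ.cleav (yon a)).pushObj ((postcompNat ξ (yon a)).obj α) θW)).app a).toFunctor.obj x =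
        (ξ.app a).toFunctor.obj ((((Sφ.cleav (yon a)).pushObj α θ).app a).toFunctor.obj x) :=
      Functor.congr_obj (congrArg (fun (t : yon a ⟶ H) => (NatTrans.app t a).toFunctor) HO) x
    have HMc : (ξ.app a).toFunctor.map ((((Sφ.cleav (yon a)).pushMap α θ).app a).app x) =
        (((Sψ.cleav (yon a)).pushMap ((postcompNat ξ (yon a)).obj α) θW).app a).app x ≫
          eqToHom HOc := by
      have := congrArg (fun (t : ((postcompNat ξ (yon a)).obj α) ⟶
          ((postcompNat ξ (yon a)).obj ((Sφ.cleav (yon a)).pushObj α θ))) =>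
          (t.app a).app x) HM
      rw [modif_comp_app, modif_eqToHom_app] at this
      exact this
    -- descend from the component at `𝟙 a` to `e` and `f` themselves
    have he : (α.app a).toFunctor.obj x = e := Functor.congr_obj (congrArg Cat.Hom.toFunctor (G.map_id a)) e
    have hc : ((yonTrans a F c).app a).toFunctor.obj x = c := Functor.congr_obj (congrArg Cat.Hom.toFunctor (F.map_id a)) c
    have hfid := Functor.congr_hom (congrArg Cat.Hom.toFunctor (F.map_id a)) f
    simp only [Cat.Hom.id_map] at hfid
    obtain ⟨k1, k2⟩ := (clφ a).push_congr he hc ((θ.app a).app x) f (by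
      show eqToHom _ ≫ (F.map (𝟙 a)).toFunctor.map f = _
      rw [hfid]
      apply eqToHom_shuffle)
    have he' : (((postcompNat ξ (yon a)).obj α).app a).toFunctor.obj x = (ξ.app a).toFunctor.obj e :=
      congrArg (fun t => (ξ.app a).toFunctor.obj t) he
    obtain ⟨k3, k4⟩ := (clψ a).push_congr he' hc ((θW.app a).app x)
      (eqToHom (Functor.congr_obj wa e).symm ≫ (𝟭 (F.obj a : Type u)).map f) (by
      erw [hθW, modif_comp_app, modif_eqToHom_app]
      show eqToHom _ ≫ eqToHom _ ≫ (F.map (𝟙 a)).toFunctor.map f = _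
      rw [hfid]
      simp [eqToHom_trans]
      apply eqToHom_shuffle3)
    refine ⟨k3.symm.trans (h3.trans (HOc.trans
      (congrArg (fun t => (ξ.app a).toFunctor.obj t) (h1.symm.trans k1)))), ?_⟩
    rw [h2, h4, k2, k4] at HMc
    simp only [Functor.map_comp, eqToHom_map, Category.assoc, eqToHom_trans] at HMc
    have := (cancel_epi (eqToHom he')).mp HMc
    rw [comp_eqToHom_iff] at this
    rw [this]
    simp [eqToHom_trans]
  · intro hcomp X
    have hWobj : ∀ α : NatCat X G, (postcompNat φ X ⋙ 𝟭 (NatCat X F)).obj α =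
        (postcompNat ξ X ⋙ postcompNat ψ X).obj α := by
      intro α
      show α ≫ φ = (α ≫ ξ) ≫ ψ
      exact ((congrArg (fun t => (α : X ⟶ G) ≫ t) hξ).symm.trans (Category.assoc (α : X ⟶ G) ξ ψ).symm)
    have W : postcompNat φ X ⋙ 𝟭 (NatCat X F) = postcompNat ξ X ⋙ postcompNat ψ X := by
      refine CategoryTheory.Functor.ext hWobj fun α α' m => ?_
      apply modif_hom_ext
      intro a x
      rw [modif_comp_app, modif_comp_app, modif_eqToHom_app, modif_eqToHom_app]
      have := Functor.congr_hom (hξa a) ((m.app a).app x)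
      simp only [Functor.comp_map] at this
      show (φ.app a).toFunctor.map ((m.app a).app x) =
        _ ≫ (ψ.app a).toFunctor.map ((ξ.app a).toFunctor.map ((m.app a).app x)) ≫ _
      rw [this]
      have key : ∀ {C : Type u} [Category.{u} C] {a1 a2 a3 a4 : C} (M : a2 ⟶ a3) (h1 : a2 = a1)
          (h2 : a1 = a2) (h3 : a3 = a4) (h4 : a4 = a3),
          M = eqToHom h1 ≫ (eqToHom h2 ≫ M ≫ eqToHom h3) ≫ eqToHom h4 := by
        intros; subst_vars; simp
      apply key
    refine ⟨W, fun α {β} θ => ?_⟩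
    set θW : (postcompNat ψ X).obj ((postcompNat ξ X).obj α) ⟶ β :=
      eqToHom (Functor.congr_obj W α).symm ≫ (𝟭 (NatCat X F)).map θ with hθW
    have key : ∀ (a : A) (x : (X.obj a : Type u)),
        ∃ ho : (((Sψ.cleav X).pushObj ((postcompNat ξ X).obj α) θW).app a).toFunctor.obj x =
            (ξ.app a).toFunctor.obj ((((Sφ.cleav X).pushObj α θ).app a).toFunctor.obj x),
          (ξ.app a).toFunctor.map ((((Sφ.cleav X).pushMap α θ).app a).app x) =
            (((Sψ.cleav X).pushMap ((postcompNat ξ X).obj α) θW).app a).app x ≫ eqToHom ho := by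
      intro a x
      obtain ⟨wa, ha⟩ := hcomp a
      obtain ⟨h1, h2⟩ := hφc X α θ a x
      obtain ⟨h3, h4⟩ := hψc X ((postcompNat ξ X).obj α) θW a x
      obtain ⟨h5, h6⟩ := ha ((α.app a).toFunctor.obj x) ((θ.app a).app x)
      have harg : (θW.app a).app x =
          eqToHom (Functor.congr_obj wa ((α.app a).toFunctor.obj x)).symm ≫
            (𝟭 (F.obj a : Type u)).map ((θ.app a).app x) := by
        rw [hθW, modif_comp_app, modif_eqToHom_app]
        rfl
      obtain ⟨k1, k2⟩ := (clψ a).push_congr rfl rfl ((θW.app a).app x)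
        (eqToHom (Functor.congr_obj wa ((α.app a).toFunctor.obj x)).symm ≫
          (𝟭 (F.obj a : Type u)).map ((θ.app a).app x)) (by rw [harg]; simp; rfl)
      refine ⟨h3.symm.trans (k1.trans (h5.trans (congrArg (ξ.app a).toFunctor.obj h1))), ?_⟩
      rw [h2, Functor.map_comp, eqToHom_map, h6, h4, k2]
      simp only [eqToHom_refl, Category.id_comp, Category.assoc, eqToHom_trans,
        Functor.id_map]
      rfl
    have hOBJ : (Sψ.cleav X).pushObj ((postcompNat ξ X).obj α) θW =
        (postcompNat ξ X).obj ((Sφ.cleav X).pushObj α θ) := by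
      apply NatTrans.ext
      funext a
      have hβψ : ((((Sψ.cleav X).pushObj ((postcompNat ξ X).obj α) θW).app a).toFunctor :
          (X.obj a : Type u) ⥤ (H.obj a : Type u)) ⋙
          ((ψ.app a).toFunctor : (H.obj a : Type u) ⥤ (F.obj a : Type u)) = (β.app a).toFunctor :=
        congrArg (fun (t : X ⟶ F) => (NatTrans.app t a).toFunctor)
          ((Sψ.cleav X).pushObj_eq ((postcompNat ξ X).obj α) θW)
      have hβφ : (((((Sφ.cleav X).pushObj α θ).app a).toFunctor :
          (X.obj a : Type u) ⥤ (G.obj a : Type u)) ⋙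
          ((ξ.app a).toFunctor : (G.obj a : Type u) ⥤ (H.obj a : Type u))) ⋙
          ((ψ.app a).toFunctor : (H.obj a : Type u) ⥤ (F.obj a : Type u)) = (β.app a).toFunctor := by
        rw [Functor.assoc, hξa a]
        exact congrArg (fun (t : X ⟶ F) => (NatTrans.app t a).toFunctor) ((Sφ.cleav X).pushObj_eq α θ)
      refine Cat.ext (CategoryTheory.Functor.ext (fun x => (key a x).choose) ?_)
      intro x y u
      obtain ⟨h3, h4⟩ := hψc X ((postcompNat ξ X).obj α) θW a x
      have hv := (clψ a).cocart_ext ((((postcompNat ξ X).obj α).app a).toFunctor.obj x)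
        ((θW.app a).app x)
        (eqToHom h3 ≫ (((Sψ.cleav X).pushObj ((postcompNat ξ X).obj α) θW).app a).toFunctor.map u)
        (eqToHom h3 ≫ eqToHom (key a x).choose ≫
          (ξ.app a).toFunctor.map ((((Sφ.cleav X).pushObj α θ).app a).toFunctor.map u) ≫
          eqToHom (key a y).choose.symm) ?_ ?_
      · rw [← cancel_epi (eqToHom h3)]
        exact hv
      · -- images under ψ agree
        have c1 := Functor.congr_hom hβψ u
        have c2 := Functor.congr_hom hβφ u
        simp only [Functor.comp_map] at c1 c2
        simp [Functor.map_comp, eqToHom_map, c1, c2]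
      · -- compositions with the pushMap agree
        have e1 : (clψ a).pushMap ((((postcompNat ξ X).obj α).app a).toFunctor.obj x)
            ((θW.app a).app x) ≫ eqToHom h3 =
            (((Sψ.cleav X).pushMap ((postcompNat ξ X).obj α) θW).app a).app x := h4.symm
        have e2 : (((Sψ.cleav X).pushMap ((postcompNat ξ X).obj α) θW).app a).app x ≫
            eqToHom (key a x).choose =
            (ξ.app a).toFunctor.map ((((Sφ.cleav X).pushMap α θ).app a).app x) :=
          ((key a x).choose_spec).symm
        have e3 : (ξ.app a).toFunctor.map ((((Sφ.cleav X).pushMap α θ).app a).app y) ≫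
            eqToHom (key a y).choose.symm =
            (((Sψ.cleav X).pushMap ((postcompNat ξ X).obj α) θW).app a).app y := by
          refine (comp_eqToHom_iff _ _ _).mpr ?_
          exact (key a y).choose_spec
        rw [← Category.assoc, e1, ← Category.assoc, e1]
        rw [← ((((Sψ.cleav X).pushMap ((postcompNat ξ X).obj α) θW)).app a).naturality u]
        rw [← Category.assoc, e2]
        erw [← Functor.map_comp_assoc]
        rw [← (((Sφ.cleav X).pushMap α θ).app a).naturality u]
        rw [Functor.map_comp, Category.assoc, e3]
        rfl
    refine ⟨hOBJ, ?_⟩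
    apply modif_hom_ext
    intro a x
    rw [modif_comp_app, modif_eqToHom_app]
    exact (key a x).choose_spec

end Statement7

end IG
end

section
/- Let A be a small category and F : A ⥤ Cat a functor. There is an isomorphism of categories between the category [∫F, Cat] of functors ∫F ⥤ Cat (with natural transformations) and the category whose objects are lax cocones under F with vertex Cat (equivalently, oplax natural transformations from the constant 2-functor Δ1 : A^op → CAT to the 2-functor A^op → CAT sending A to the functor category [F(A), Cat]) and whose morphisms are modifications. Moreover, this isomorphism is strictly 2-natural in F ∈ [A, Cat], and it restricts to an isomorphism between [∫F, Set] and the category of lax cocones under F with vertex Set. -/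
universe w' w v u
open CategoryTheory
namespace IG

section LaxCoconeSection

variable {A : Type u} [Category.{u} A]

/-- A lax cocone under `F : A ⥤ Cat` with vertex `U` (i.e. a lax natural
transformation from `F` to the constant functor at `U`, equivalently an oplax
natural transformation `Δ1 ⟹ [F(−), U]`). -/
structure LaxCocone (F : A ⥤ Cat.{u, u}) (U : Type w) [Category.{w'} U] where
  app : ∀ a : A, (F.obj a : Type u) ⥤ U
  nat : ∀ {a b : A} (h : a ⟶ b),
    app a ⟶ (F.map h).toFunctor ⋙ app b
  nat_id : ∀ a : A, nat (𝟙 a) = eqToHom (by simp only [CategoryTheory.Functor.map_id]; rfl)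
  nat_comp : ∀ {a b c : A} (h : a ⟶ b) (k : b ⟶ c),
    nat (h ≫ k) = nat h ≫ Functor.whiskerLeft (F.map h).toFunctor (nat k) ≫
      eqToHom (by simp only [Functor.map_comp]; rfl)

/-- A modification of lax cocones. -/
@[ext]
structure LaxCoconeHom {F : A ⥤ Cat.{u, u}} {U : Type w} [Category.{w'} U]
    (σ τ : LaxCocone F U) where
  app : ∀ a : A, σ.app a ⟶ τ.app a
  naturality : ∀ {a b : A} (h : a ⟶ b),
    σ.nat h ≫ Functor.whiskerLeft (F.map h).toFunctor (app b) =
      app a ≫ τ.nat h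

/-- The category of lax cocones under `F` with vertex `U`, with modifications as
morphisms. -/
instance laxCoconeCategory (F : A ⥤ Cat.{u, u}) (U : Type w) [Category.{w'} U] :
    Category (LaxCocone F U) where
  Hom σ τ := LaxCoconeHom σ τ
  id σ :=
    { app := fun a => 𝟙 _
      naturality := by
        intro a b h
        rw [Functor.whiskerLeft_id', Category.comp_id, Category.id_comp] }
  comp m n :=
    { app := fun a => m.app a ≫ n.app a
      naturality := by
        intro a b h
        rw [Functor.whiskerLeft_comp, ← Category.assoc, m.naturality, Category.assoc, n.naturality,
          ← Category.assoc] }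
  id_comp m := by apply LaxCoconeHom.ext; funext a; simp
  comp_id m := by apply LaxCoconeHom.ext; funext a; simp
  assoc m n o := by apply LaxCoconeHom.ext; funext a; simp

end LaxCoconeSection
section Construction

open Grothendieck

variable {A : Type u} [Category.{u} A]

theorem natTrans_heq {C : Type*} [Category C] {D : Type*} [Category D]
    {P P' Q Q' : C ⥤ D} (hP : P = P') (hQ : Q = Q') {η : P ⟶ Q} {η' : P' ⟶ Q'}
    (h : ∀ X, η.app X ≫ eqToHom (Functor.congr_obj hQ X) =
      eqToHom (Functor.congr_obj hP X) ≫ η'.app X) : HEq η η' := by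
  subst hP; subst hQ
  rw [heq_iff_eq]
  ext X
  simpa using h X

theorem app_congr {C : Type*} [Category C] {D : Type*} [Category D] {P Q : C ⥤ D}
    (η : P ⟶ Q) {X Y : C} (h : X = Y) :
    η.app X = eqToHom (by rw [h]) ≫ η.app Y ≫ eqToHom (by rw [h]) := by
  subst h; simp

theorem LaxCocone.ext'' {F : A ⥤ Cat.{u, u}} {U : Type w} [Category.{w'} U]
    {σ τ : LaxCocone F U} (happ : σ.app = τ.app)
    (hnat : ∀ {a b : A} (h : a ⟶ b), HEq (σ.nat h) (τ.nat h)) : σ = τ := by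
  obtain ⟨sa, sn, _, _⟩ := σ; obtain ⟨ta, tn, _, _⟩ := τ
  dsimp at happ
  subst happ
  have : @sn = @tn := by
    funext a b h
    exact eq_of_heq (hnat h)
  subst this
  rfl

theorem LaxCocone.eqToHom_app {F : A ⥤ Cat.{u, u}} {U : Type w} [Category.{w'} U]
    {σ τ : LaxCocone F U} (h : σ = τ) (a : A) :
    (LaxCoconeHom.app (eqToHom h) a) = eqToHom (by rw [h]) := by
  subst h; rfl

theorem LaxCoconeHom.comp_app' {F : A ⥤ Cat.{u, u}} {U : Type w} [Category.{w'} U]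
    {σ τ ρ : LaxCocone F U} (x : σ ⟶ τ) (y : τ ⟶ ρ) (a : A) :
    LaxCoconeHom.app (x ≫ y) a = LaxCoconeHom.app x a ≫ LaxCoconeHom.app y a := rfl

variable (F : A ⥤ Cat.{u, u}) (U : Type w) [Category.{w'} U]

theorem base_eqToHom {F : A ⥤ Cat.{u, u}} {X Y : Grothendieck F} (h : X = Y) :
    (eqToHom h).base = eqToHom (by subst h; rfl) := by subst h; rfl

theorem fiber_eqToHom {F : A ⥤ Cat.{u, u}} {X Y : Grothendieck F} (h : X = Y) :
    (eqToHom h).fiber = eqToHom (by subst h; simp) := by subst h; simp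

theorem ιNatTrans_id_app' (a : A) (X : F.obj a) :
    (ιNatTrans (𝟙 a)).app X = eqToHom (by simp) := by
  rw [Grothendieck.eqToHom_eq]
  exact Grothendieck.ext _ _ (by simp [ι, ιNatTrans]; rfl) (by simp [ι, ιNatTrans]; erw [Category.comp_id])

theorem ιNatTrans_comp_app' {a b c : A} (h : a ⟶ b) (k : b ⟶ c) (X : F.obj a) :
    (ιNatTrans h).app X ≫ (ιNatTrans k).app ((F.map h).toFunctor.obj X) =
      (ιNatTrans (h ≫ k)).app X ≫ eqToHom (by simp) := by
  delta ι ιNatTrans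
  dsimp only
  refine Grothendieck.ext _ _ (by simp [base_eqToHom]) ?_
  simp [base_eqToHom, fiber_eqToHom, eqToHom_map]
  erw [eqToHom_trans, eqToHom_trans]

/-- the functor `[∫F, U] ⥤ LaxCocone F U`. -/
def coconeF : (Grothendieck F ⥤ U) ⥤ LaxCocone F U where
  obj s :=
  { app := fun a => ι F a ⋙ s
    nat := fun h => Functor.whiskerRight (ιNatTrans h) s
    nat_id := fun a => by
      ext X
      simp [ιNatTrans_id_app', eqToHom_map, eqToHom_app]
    nat_comp := fun {a b c} h k => by
      ext X
      have := congrArg s.map (ιNatTrans_comp_app' F h k X)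
      rw [s.map_comp, s.map_comp, eqToHom_map] at this
      dsimp
      rw [← Category.assoc, this, Category.assoc]
      simp [eqToHom_app] }
  map {s t} η :=
  { app := fun a => Functor.whiskerLeft (ι F a) η
    naturality := fun {a b} h => by
      ext X
      exact η.naturality _ }
  map_id s := by apply LaxCoconeHom.ext; funext a; rfl
  map_comp η θ := by apply LaxCoconeHom.ext; funext a; rfl

/-- the functor `LaxCocone F U ⥤ [∫F, U]`. -/
def ofCoconeF : LaxCocone F U ⥤ (Grothendieck F ⥤ U) where
  obj σ := functorFrom σ.app σ.nat σ.nat_id (fun _ _ _ f g => σ.nat_comp f g)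
  map {σ τ} m :=
  { app := fun X => (LaxCoconeHom.app m X.base).app X.fiber
    naturality := fun X Y f => by
      have h1 := NatTrans.congr_app (LaxCoconeHom.naturality m f.base) X.fiber
      dsimp [functorFrom] at h1 ⊢
      rw [Category.assoc, (LaxCoconeHom.app m Y.base).naturality f.fiber, ← Category.assoc,
        h1, Category.assoc] }
  map_id σ := by apply NatTrans.ext; funext X; rfl
  map_comp m n := by apply NatTrans.ext; funext X; rfl

theorem ι_comp_eq {X Y : Grothendieck F} (f : X ⟶ Y) :
    (ιNatTrans f.base).app X.fiber ≫ (ι F Y.base).map f.fiber = f := by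
  delta ι ιNatTrans
  dsimp only
  refine Grothendieck.ext _ _ (by simp) ?_
  simp [eqToHom_map]
  erw [eqToHom_trans_assoc, eqToHom_trans_assoc, eqToHom_refl, Category.id_comp]

theorem coconeF_ofCoconeF_obj (s : Grothendieck F ⥤ U) :
    (ofCoconeF F U).obj ((coconeF F U).obj s) = s := by
  refine CategoryTheory.Functor.ext (fun X => rfl) ?_
  intro X Y f
  have h2 : ((ofCoconeF F U).obj ((coconeF F U).obj s)).map f = s.map f := by
    dsimp [ofCoconeF, coconeF, functorFrom]
    rw [← s.map_comp]
    exact congrArg s.map (ι_comp_eq F f)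
  simp [h2]
  erw [eqToHom_refl, eqToHom_refl, Category.id_comp, Category.comp_id]

theorem coconeF_ofCoconeF : coconeF F U ⋙ ofCoconeF F U = 𝟭 _ := by
  refine CategoryTheory.Functor.ext (coconeF_ofCoconeF_obj F U) ?_
  intro s t η
  ext X
  simp [eqToHom_app, ofCoconeF, coconeF]
  erw [eqToHom_app, eqToHom_app, eqToHom_refl, eqToHom_refl, Category.id_comp, Category.comp_id]
  rfl

theorem ofCoconeF_coconeF_app (σ : LaxCocone F U) (a : A) :
    (ι F a ⋙ (ofCoconeF F U).obj σ) = σ.app a := by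
  refine CategoryTheory.Functor.ext (fun X => rfl) ?_
  intro X Y m
  dsimp [ofCoconeF, functorFrom, ι]
  rw [σ.nat_id]
  simp [eqToHom_app, eqToHom_map]
  erw [eqToHom_refl, Category.id_comp]

theorem ofCoconeF_coconeF_obj (σ : LaxCocone F U) :
    (coconeF F U).obj ((ofCoconeF F U).obj σ) = σ := by
  refine LaxCocone.ext'' (funext fun a => ofCoconeF_coconeF_app F U σ a) ?_
  intro a b h
  refine natTrans_heq (ofCoconeF_coconeF_app F U σ a)
    (by dsimp [coconeF]; rw [ofCoconeF_coconeF_app F U σ b]) ?_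
  intro X
  dsimp [ofCoconeF, coconeF, functorFrom]
  delta ι ιNatTrans
  dsimp only
  simp
  erw [eqToHom_refl, Category.id_comp]

theorem ofCoconeF_coconeF : ofCoconeF F U ⋙ coconeF F U = 𝟭 _ := by
  refine CategoryTheory.Functor.ext (ofCoconeF_coconeF_obj F U) ?_
  intro σ τ m
  apply LaxCoconeHom.ext
  funext a
  ext X
  simp [LaxCoconeHom.comp_app', LaxCocone.eqToHom_app, eqToHom_app, ofCoconeF, coconeF]
  erw [LaxCocone.eqToHom_app, LaxCocone.eqToHom_app, eqToHom_app, eqToHom_app, eqToHom_refl, eqToHom_refl, Category.id_comp, Category.comp_id]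
  rfl


theorem ι_comp_map {F' F : A ⥤ Cat.{u, u}} (α : F' ⟶ F) (a : A) :
    ι F' a ⋙ Grothendieck.map α = (α.app a).toFunctor ⋙ ι F a := by
  exact Functor.ext_of_iso (ιCompMap α a) (fun X => rfl) (fun X => rfl)

theorem map_ιNatTrans {F' F : A ⥤ Cat.{u, u}} (α : F' ⟶ F) {a b : A} (h : a ⟶ b)
    (X : F'.obj a) :
    (Grothendieck.map α).map ((ιNatTrans h).app X) =
      (ιNatTrans h).app ((α.app a).toFunctor.obj X) ≫
        eqToHom (by
          have e := Functor.congr_obj (congrArg Cat.Hom.toFunctor (α.naturality h)) X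
          dsimp [Grothendieck.map, ι] at e ⊢
          rw [e]) := by
  delta ι ιNatTrans
  dsimp only
  refine Grothendieck.ext _ _ (by simp [base_eqToHom]; erw [eqToHom_refl, Category.comp_id]) ?_
  simp [Grothendieck.map, fiber_eqToHom, eqToHom_map]
  erw [Grothendieck.fiber_eqToHom, eqToHom_trans, eqToHom_trans]

/-- pullback of lax cocones along a natural transformation `α : F' ⟶ F`. -/
def pullCocone {F' F : A ⥤ Cat.{u, u}} (α : F' ⟶ F) : LaxCocone F U ⥤ LaxCocone F' U where
  obj σ :=
  { app := fun a => (α.app a).toFunctor ⋙ σ.app a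
    nat := fun {a b} h => Functor.whiskerLeft (α.app a).toFunctor (σ.nat h) ≫
      eqToHom (by
        rw [← Functor.assoc, ← Functor.assoc]
        exact congrArg (· ⋙ σ.app b) (congrArg Cat.Hom.toFunctor (α.naturality h)).symm)
    nat_id := fun a => by
      ext X
      rw [σ.nat_id]
      simp [eqToHom_app]
    nat_comp := fun {a b c} h k => by
      ext X
      rw [σ.nat_comp]
      have e := Functor.congr_obj (congrArg Cat.Hom.toFunctor (α.naturality h)) X
      dsimp at e
      dsimp
      rw [app_congr (σ.nat k) e.symm]
      simp [eqToHom_app] }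
  map {σ τ} m :=
  { app := fun a => Functor.whiskerLeft (α.app a).toFunctor (LaxCoconeHom.app m a)
    naturality := fun {a b} h => by
      ext X
      have h1 := NatTrans.congr_app (LaxCoconeHom.naturality m h) ((α.app a).toFunctor.obj X)
      have e := Functor.congr_obj (congrArg Cat.Hom.toFunctor (α.naturality h)) X
      dsimp at h1 e ⊢
      rw [app_congr (LaxCoconeHom.app m b) e]
      simp [eqToHom_app]
      rw [← Category.assoc, h1, Category.assoc] }
  map_id σ := by apply LaxCoconeHom.ext; funext a; ext X; rfl
  map_comp m n := by apply LaxCoconeHom.ext; funext a; ext X; rfl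

theorem pull_square {F' F : A ⥤ Cat.{u, u}} (α : F' ⟶ F) :
    (Functor.whiskeringLeft _ _ _).obj (Grothendieck.map α) ⋙ coconeF F' U =
      coconeF F U ⋙ pullCocone U α := by
  refine CategoryTheory.Functor.ext (fun s => ?_) (fun {s t} η => ?_)
  · refine LaxCocone.ext'' (funext fun a => ?_) (fun {a b} h => ?_)
    · show ι F' a ⋙ (Grothendieck.map α ⋙ s) = (α.app a).toFunctor ⋙ (ι F a ⋙ s)
      rw [← Functor.assoc, ι_comp_map, Functor.assoc]
    · refine natTrans_heq ?_ ?_ ?_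
      · show ι F' a ⋙ (Grothendieck.map α ⋙ s) = _
        rw [← Functor.assoc, ι_comp_map, Functor.assoc]
        rfl
      · show (F'.map h).toFunctor ⋙ (ι F' b ⋙ (Grothendieck.map α ⋙ s)) = _
        dsimp [coconeF, pullCocone]
        rw [← Functor.assoc (ι F' b), ι_comp_map, Functor.assoc]
      · intro X
        dsimp [coconeF, pullCocone]
        rw [map_ιNatTrans α h X]
        simp [eqToHom_map, eqToHom_app]
        erw [Functor.map_comp, eqToHom_map, Category.assoc, eqToHom_trans, eqToHom_refl, Category.id_comp]
        rfl
  · apply LaxCoconeHom.ext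
    funext a
    ext X
    rw [LaxCoconeHom.comp_app', LaxCoconeHom.comp_app', LaxCocone.eqToHom_app,
      LaxCocone.eqToHom_app]
    dsimp [coconeF, pullCocone, Functor.whiskeringLeft]
    erw [eqToHom_app, eqToHom_app, eqToHom_refl, eqToHom_refl, Category.id_comp, Category.comp_id]
    rfl

end Construction

/-- **Statement 9.** For `F : A ⥤ Cat`, the category `[∫F, Cat]` is isomorphic to the
category of lax cocones under `F` with vertex `Cat` (with modifications as morphisms),
the isomorphism sending `s` to the cocone with components `ι_a ⋙ s` and structure
2-cells `s ⋆ ι_h`.  The isomorphism is strictly 2-natural in `F`, and restricts to an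
isomorphism between `[∫F, Set]` and lax cocones with vertex `Set`. -/
theorem functors_from_grothendieck_are_lax_cocones {A : Type u} [Category.{u} A] :
    ∃ (I : ∀ F : A ⥤ Cat.{u, u}, (Grothendieck F ⥤ Cat.{u, u}) ⥤ LaxCocone F Cat.{u, u})
      (J : ∀ F : A ⥤ Cat.{u, u}, LaxCocone F Cat.{u, u} ⥤ (Grothendieck F ⥤ Cat.{u, u})),
      -- it is an isomorphism of categories
      (∀ F, I F ⋙ J F = 𝟭 _ ∧ J F ⋙ I F = 𝟭 _) ∧
      -- explicit description via the universal oplax cocone on `∫F`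
      (∀ (F : A ⥤ Cat.{u, u}) (s : Grothendieck F ⥤ Cat.{u, u}),
        (∀ a : A, ((I F).obj s).app a = Grothendieck.ι F a ⋙ s) ∧
        (∀ {a b : A} (h : a ⟶ b),
          HEq (((I F).obj s).nat h) (Functor.whiskerRight (Grothendieck.ιNatTrans h) s))) ∧
      -- strict 2-naturality in `F`
      (∀ {F' F : A ⥤ Cat.{u, u}} (α : F' ⟶ F),
        ∃ Pr : LaxCocone F Cat.{u, u} ⥤ LaxCocone F' Cat.{u, u},
          (∀ σ : LaxCocone F Cat.{u, u},
            (∀ a : A, (Pr.obj σ).app a =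
              (α.app a).toFunctor ⋙ σ.app a) ∧
            (∀ {a b : A} (h : a ⟶ b),
              HEq ((Pr.obj σ).nat h)
                (Functor.whiskerLeft (α.app a).toFunctor (σ.nat h)))) ∧
          (Functor.whiskeringLeft _ _ _).obj (Grothendieck.map α) ⋙ I F' = I F ⋙ Pr) ∧
      -- restriction to `Set`-valued copresheaves / cocones with vertex `Set`
      (∃ (ISet : ∀ F : A ⥤ Cat.{u, u}, (Grothendieck F ⥤ Type u) ⥤ LaxCocone F (Type u))
         (JSet : ∀ F : A ⥤ Cat.{u, u}, LaxCocone F (Type u) ⥤ (Grothendieck F ⥤ Type u)),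
         (∀ F, ISet F ⋙ JSet F = 𝟭 _ ∧ JSet F ⋙ ISet F = 𝟭 _) ∧
         (∀ (F : A ⥤ Cat.{u, u}) (Z : Grothendieck F ⥤ Type u) (a : A),
           ((I F).obj (Z ⋙ typeToCat)).app a = ((ISet F).obj Z).app a ⋙ typeToCat)) := by
  refine ⟨fun F => coconeF F Cat.{u, u}, fun F => ofCoconeF F Cat.{u, u},
    fun F => ⟨coconeF_ofCoconeF F _, ofCoconeF_coconeF F _⟩,
    fun F s => ⟨fun a => rfl, fun {a b} h => HEq.rfl⟩,
    fun {F' F} α => ⟨pullCocone Cat.{u, u} α,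
      fun σ => ⟨fun a => rfl, fun {a b} h => comp_eqToHom_heq _ _⟩,
      pull_square Cat.{u, u} α⟩,
    ⟨fun F => coconeF F (Type u), fun F => ofCoconeF F (Type u),
      fun F => ⟨coconeF_ofCoconeF F _, ofCoconeF_coconeF F _⟩,
      fun F Z a => rfl⟩⟩

end IG
end
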